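/- arXiv:1904.05502 — 4 statements merged into one kernel-verified Lean document; each statement's English description precedes it below -/
import Mathlib

section
/- Let 0 < α < 1 and λ ∈ ℝ. Then for every t > 0, the function t ↦ E_{α,1}(−λ t^α) is differentiable and its derivative satisfies d/dt [E_{α,1}(−λ t^α)] = −λ t^{α−1} E_{α,α}(−λ t^α). -/
open Real Filter

/-- The (real) Mittag-Leffler function `E_{α,β}(x) = Σ_{k=0}^∞ x^k / Γ(αk + β)`. -/
noncomputable def mittagLeffler (α β : ℝ) (x : ℝ) : ℝ :=
  ∑' k : ℕ, x ^ k / Real.Gamma (α * k + β)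

lemma summable_ml_aux {α β : ℝ} (hα : 0 < α) (hβ : 0 < β) {c : ℝ} (hc : 0 ≤ c) :
    Summable fun k : ℕ => ((k : ℝ) + 1) * c ^ k / Real.Gamma (α * k + β) := by
  set r : ℝ := (2 * (c + 1)) ^ (1 / α) with hr
  have h2c : (1 : ℝ) < 2 * (c + 1) := by nlinarith
  have hr1 : 1 ≤ r := Real.one_le_rpow h2c.le (by positivity)
  have hr0 : 0 < r := lt_of_lt_of_le one_pos hr1
  have hrα : r ^ α = 2 * (c + 1) := by
    rw [hr, ← Real.rpow_mul (by linarith), one_div_mul_cancel hα.ne', Real.rpow_one]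
  have hfact : ∀ᶠ (n : ℕ) in atTop, (r ^ n : ℝ) ≤ (Nat.factorial n : ℝ) := by
    have h := FloorSemiring.tendsto_pow_div_factorial_atTop (K := ℝ) r
    filter_upwards [h.eventually (gt_mem_nhds one_pos)] with n h1
    have hn : (0 : ℝ) < (Nat.factorial n : ℝ) := by positivity
    rw [div_lt_one hn] at h1
    exact h1.le
  obtain ⟨N, hN⟩ := eventually_atTop.mp hfact
  have hfloor : Tendsto (fun k : ℕ => Nat.floor (α * (k : ℝ))) atTop atTop :=
    tendsto_nat_floor_atTop.comp (Tendsto.const_mul_atTop hα tendsto_natCast_atTop_atTop)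
  set q : ℝ := c / (2 * (c + 1)) with hq
  have hq0 : 0 ≤ q := by positivity
  have hq1 : q < 1 := by rw [hq, div_lt_one (by linarith)]; linarith
  have hg : Summable fun k : ℕ => r ^ 2 * (((k : ℝ) + 1) * q ^ k) := by
    refine Summable.mul_left _ ?_
    have h1 := summable_pow_mul_geometric_of_norm_lt_one (R := ℝ) 1
      (by rwa [Real.norm_eq_abs, abs_of_nonneg hq0] : ‖q‖ < 1)
    have h2 := summable_geometric_of_lt_one hq0 hq1
    exact (h1.add h2).congr fun k => by push_cast; ring
  refine Summable.of_norm_bounded_eventually_nat hg ?_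
  filter_upwards [hfloor.eventually_ge_atTop (N + 2)] with k hk
  set m : ℕ := Nat.floor (α * (k : ℝ)) with hm
  have hm2 : 2 ≤ m := by omega
  have hαk0 : (0 : ℝ) ≤ α * k := by positivity
  have hmle : (m : ℝ) ≤ α * k := Nat.floor_le hαk0
  have hmgt : α * (k : ℝ) < m + 1 := Nat.lt_floor_add_one _
  have hΓpos : 0 < Real.Gamma (α * k + β) := Real.Gamma_pos_of_pos (by positivity)
  -- Gamma lower bound
  have hmono := Real.Gamma_strictMonoOn_Ici.monotoneOn
  have hm2R : (2:ℝ) ≤ (m:ℝ) := by exact_mod_cast hm2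
  have hΓ1 : Real.Gamma (m : ℝ) ≤ Real.Gamma (α * k + β) := by
    apply hmono (Set.mem_Ici.mpr hm2R) (Set.mem_Ici.mpr (by linarith)) (by linarith)
  have hΓm : Real.Gamma (m : ℝ) = (Nat.factorial (m - 1) : ℝ) := by
    have h : ((m : ℝ)) = ((m - 1 : ℕ) : ℝ) + 1 := by
      have : m - 1 + 1 = m := by omega
      exact_mod_cast this.symm
    rw [h, Real.Gamma_nat_eq_factorial]
  have hfle : r ^ (m - 1) ≤ (Nat.factorial (m - 1) : ℝ) := hN (m - 1) (by omega)
  have hrp : ((2 * (c + 1)) : ℝ) ^ k / r ^ 2 ≤ r ^ (m - 1) := by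
    have h1 : ((2 * (c + 1)) : ℝ) ^ k / r ^ 2 = r ^ (α * k - 2) := by
      rw [Real.rpow_sub hr0]
      congr 1
      · rw [Real.rpow_mul hr0.le, hrα, Real.rpow_natCast]
      · rw [show (2:ℝ) = ((2:ℕ):ℝ) by norm_num, Real.rpow_natCast]
    have h2 : r ^ (α * k - 2 : ℝ) ≤ r ^ (((m - 1 : ℕ) : ℝ)) := by
      apply Real.rpow_le_rpow_of_exponent_le hr1
      have : ((m - 1 : ℕ) : ℝ) = (m : ℝ) - 1 := by
        have : 1 ≤ m := by omega
        push_cast [this]; ring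
      rw [this]; linarith
    rw [h1]
    calc r ^ (α * k - 2 : ℝ) ≤ r ^ (((m - 1 : ℕ) : ℝ)) := h2
      _ = r ^ (m - 1) := Real.rpow_natCast r (m - 1)
  have key : ((2 * (c + 1)) : ℝ) ^ k / r ^ 2 ≤ Real.Gamma (α * k + β) := by
    calc ((2 * (c + 1)) : ℝ) ^ k / r ^ 2 ≤ r ^ (m - 1) := hrp
      _ ≤ (Nat.factorial (m - 1) : ℝ) := hfle
      _ = Real.Gamma (m : ℝ) := hΓm.symm
      _ ≤ _ := hΓ1
  have hden : (0:ℝ) < ((2 * (c + 1)) : ℝ) ^ k / r ^ 2 := by positivity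
  rw [Real.norm_eq_abs, abs_of_nonneg (by positivity)]
  calc ((k : ℝ) + 1) * c ^ k / Real.Gamma (α * k + β)
      ≤ ((k : ℝ) + 1) * c ^ k / (((2 * (c + 1)) : ℝ) ^ k / r ^ 2) := by
        apply div_le_div_of_nonneg_left (by positivity) hden key
    _ = r ^ 2 * (((k : ℝ) + 1) * q ^ k) := by
        have h1 : r ≠ 0 := hr0.ne'
        have h2 : ((2 * (c + 1)) : ℝ) ^ k ≠ 0 := by positivity
        rw [hq, div_pow]
        field_simp

/-- For `0 < α < 1`, `λ ∈ ℝ` and every `t > 0`, the function `t ↦ E_{α,1}(−λ t^α)` is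
differentiable with derivative `−λ t^{α−1} E_{α,α}(−λ t^α)`. -/
theorem hasDerivAt_mittagLeffler_eigenmode (α lam : ℝ) (hα0 : 0 < α) (hα1 : α < 1) :
    ∀ t : ℝ, 0 < t →
      HasDerivAt (fun τ : ℝ => mittagLeffler α 1 (-lam * τ ^ α))
        (-lam * t ^ (α - 1) * mittagLeffler α α (-lam * t ^ α)) t := by
  intro t ht
  set M : ℝ := max (t + 1) 1 with hM
  have hM1 : 1 ≤ M := le_max_right _ _
  have hM0 : 0 < M := lt_of_lt_of_le one_pos hM1
  set c : ℝ := |lam| * M ^ α with hc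
  have hc0 : 0 ≤ c := by positivity
  set s : Set ℝ := Set.Ioo (t / 2) (t + 1) with hs
  have hts : t ∈ s := ⟨by linarith, by linarith⟩
  set g : ℕ → ℝ → ℝ := fun n τ => (-lam * τ ^ α) ^ n / Real.Gamma (α * n + 1) with hgdef
  set g' : ℕ → ℝ → ℝ := fun n y =>
    (-lam) ^ n * (α * n * y ^ (α * n - 1)) / Real.Gamma (α * n + 1) with hg'def
  set u : ℕ → ℝ := fun n =>
    (2 * α / t) * (((n : ℝ) + 1) * c ^ n / Real.Gamma (α * n + 1)) with hu_def
  have hΓpos : ∀ n : ℕ, 0 < Real.Gamma (α * n + 1) := fun n =>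
    Real.Gamma_pos_of_pos (by positivity)
  have hu : Summable u := (summable_ml_aux hα0 one_pos hc0).mul_left _
  have hderiv : ∀ n : ℕ, ∀ y ∈ s, HasDerivAt (g n) (g' n y) y := by
    intro n y hy
    have hy0 : 0 < y := lt_trans (by positivity) hy.1
    have base : HasDerivAt (fun τ : ℝ => τ ^ (α * n : ℝ))
        ((α * n) * y ^ (α * n - 1)) y := Real.hasDerivAt_rpow_const (Or.inl hy0.ne')
    have h1 : HasDerivAt (fun τ : ℝ => (-lam) ^ n * τ ^ (α * n : ℝ) / Real.Gamma (α * n + 1))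
        (g' n y) y := (base.const_mul _).div_const _
    apply h1.congr_of_eventuallyEq
    filter_upwards [eventually_gt_nhds hy0] with τ hτ
    rw [hgdef]
    simp only
    rw [mul_pow, ← Real.rpow_natCast (τ ^ α) n, ← Real.rpow_mul hτ.le]
  have hbound : ∀ n : ℕ, ∀ y ∈ s, ‖g' n y‖ ≤ u n := by
    intro n y hy
    have hy0 : 0 < y := lt_trans (by positivity) hy.1
    have hyM : y ≤ M := le_trans hy.2.le (le_max_left _ _)
    have e1 : y ^ (α * (n : ℝ) - 1) ≤ (M ^ α) ^ n * (2 / t) := by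
      rw [Real.rpow_sub hy0, Real.rpow_one]
      have h1 : y ^ (α * (n : ℝ)) ≤ (M ^ α) ^ n := by
        calc y ^ (α * (n : ℝ)) ≤ M ^ (α * (n : ℝ)) :=
              Real.rpow_le_rpow hy0.le hyM (by positivity)
          _ = (M ^ α) ^ n := by
              rw [Real.rpow_mul hM0.le, Real.rpow_natCast]
      have h2 : 1 / y ≤ 2 / t := by
        rw [div_le_div_iff₀ hy0 ht]; nlinarith [hy.1]
      calc y ^ (α * (n : ℝ)) / y = y ^ (α * (n : ℝ)) * (1 / y) := by ring
        _ ≤ (M ^ α) ^ n * (2 / t) :=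
            mul_le_mul h1 h2 (by positivity) (by positivity)
    have hgabs : ‖g' n y‖ = |lam| ^ n * (α * n * y ^ (α * (n:ℝ) - 1)) / Real.Gamma (α * n + 1) := by
      rw [hg'def]
      simp only [Real.norm_eq_abs, abs_div, abs_mul, abs_pow, abs_neg,
        abs_of_pos (hΓpos n), abs_of_nonneg hα0.le,
        abs_of_nonneg (Nat.cast_nonneg n : (0:ℝ) ≤ (n : ℝ)),
        abs_of_nonneg (Real.rpow_nonneg hy0.le _)]
    have hun : u n = (2 * α / t * (((n:ℝ) + 1) * c ^ n)) / Real.Gamma (α * n + 1) := by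
      rw [hu_def]; ring
    rw [hgabs, hun]
    gcongr ?_ / _
    calc |lam| ^ n * (α * n * y ^ (α * (n:ℝ) - 1))
        ≤ |lam| ^ n * (α * ((n:ℝ) + 1) * ((M ^ α) ^ n * (2 / t))) := by
          apply mul_le_mul_of_nonneg_left ?_ (by positivity)
          apply mul_le_mul (by nlinarith [hα0.le]) e1 (by positivity) (by positivity)
      _ = 2 * α / t * (((n:ℝ) + 1) * c ^ n) := by
          rw [hc, mul_pow]; ring
  have hg0 : Summable fun n => g n t := by
    apply Summable.of_norm_bounded (summable_ml_aux hα0 one_pos (abs_nonneg (-lam * t ^ α)))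
    intro n
    rw [hgdef]
    simp only [Real.norm_eq_abs, abs_div, abs_pow, abs_of_pos (hΓpos n)]
    gcongr
    nlinarith [pow_nonneg (abs_nonneg (-lam * t ^ α)) n, Nat.cast_nonneg (α := ℝ) n]
  have main := hasDerivAt_tsum_of_isPreconnected hu isOpen_Ioo (convex_Ioo _ _).isPreconnected
    hderiv hbound hts hg0 hts
  have hsum' : Summable fun n => g' n t :=
    Summable.of_norm_bounded hu fun n => hbound n t hts
  have hval : (∑' n, g' n t) = -lam * t ^ (α - 1) * mittagLeffler α α (-lam * t ^ α) := by
    rw [Summable.tsum_eq_zero_add hsum']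
    have h0 : g' 0 t = 0 := by rw [hg'def]; simp
    rw [h0, zero_add]
    have hterm : ∀ m : ℕ, g' (m + 1) t =
        (-lam * t ^ (α - 1)) * ((-lam * t ^ α) ^ m / Real.Gamma (α * m + α)) := by
      intro m
      rw [hg'def]
      simp only
      have hΓadd : Real.Gamma (α * ((m : ℝ) + 1) + 1)
          = (α * ((m:ℝ) + 1)) * Real.Gamma (α * ((m:ℝ) + 1)) :=
        Real.Gamma_add_one (by positivity)
      have hcast : ((m + 1 : ℕ) : ℝ) = (m : ℝ) + 1 := by push_cast; ring
      rw [hcast, hΓadd]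
      have hexp : α * ((m : ℝ) + 1) - 1 = (α - 1) + α * m := by ring
      have ht1 : t ^ (α * ((m:ℝ) + 1) - 1) = t ^ (α - 1) * t ^ (α * (m:ℝ)) := by
        rw [hexp, Real.rpow_add ht]
      have ht2 : (-lam * t ^ α) ^ m = (-lam) ^ m * t ^ (α * (m:ℝ)) := by
        rw [mul_pow, ← Real.rpow_natCast (t ^ α) m, ← Real.rpow_mul ht.le]
      have hΓeq : Real.Gamma (α * ((m:ℝ) + 1)) = Real.Gamma (α * m + α) := by
        congr 1; ring
      rw [ht1, ht2, hΓeq, pow_succ]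
      have hΓpos2 : 0 < Real.Gamma (α * (m:ℝ) + α) := Real.Gamma_pos_of_pos (by positivity)
      have hαm : (0:ℝ) < α * ((m:ℝ) + 1) := by positivity
      field_simp
      try ring
    rw [tsum_congr hterm, tsum_mul_left, mittagLeffler]
  have hfun : (fun τ : ℝ => mittagLeffler α 1 (-lam * τ ^ α)) = fun z => ∑' n, g n z := by
    funext τ
    simp only [mittagLeffler, hgdef]
  rw [hfun, ← hval]
  exact main
end

section
/- Let α, β ∈ (0,1) and λ, ρ > 0. If E_{α,1}(−λ t^α) = E_{β,1}(−ρ t^β) for all t in some nonempty open interval I ⊂ (0,∞), then α = β and λ = ρ. (This is the single-eigenmode uniqueness underlying the determination of the fractional order and the coefficient from one interior point observation.) -/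
open Filter Topology Real FormalMultilinearSeries

open Filter Topology Real

noncomputable def mlCoeff (α : ℝ) (k : ℕ) : ℝ := (Real.Gamma (α * k + 1))⁻¹

lemma mlCoeff_pos {α : ℝ} (hα : 0 < α) (k : ℕ) : 0 < mlCoeff α k :=
  inv_pos.2 (Real.Gamma_pos_of_pos (by positivity))

lemma gamma_mul_le {α : ℝ} (hα0 : 0 < α) (hα1 : α < 1) {x : ℝ} (hx : 0 < x) :
    x * Real.Gamma x ≤ Real.Gamma (x + α) * (x + α) ^ (1 - α) := by
  have hxα : 0 < x + α := by linarith
  have h1 := Real.convexOn_log_Gamma.2 (Set.mem_Ioi.2 hxα)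
    (Set.mem_Ioi.2 (by linarith : (0:ℝ) < x + α + 1)) hα0.le (by linarith : (0:ℝ) ≤ 1 - α)
    (by ring)
  have hcomb : α • (x + α) + (1 - α) • (x + α + 1) = x + 1 := by
    simp only [smul_eq_mul]; ring
  rw [hcomb] at h1
  simp only [Function.comp_apply, smul_eq_mul] at h1
  have hG1 : Real.Gamma (x + α + 1) = (x + α) * Real.Gamma (x + α) :=
    Real.Gamma_add_one hxα.ne'
  have hGpos : 0 < Real.Gamma (x + α) := Real.Gamma_pos_of_pos hxα
  rw [hG1, Real.log_mul hxα.ne' hGpos.ne'] at h1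
  have h2 : Real.log (Real.Gamma (x + 1)) ≤
      Real.log (Real.Gamma (x + α)) + (1 - α) * Real.log (x + α) := by nlinarith [h1]
  have hGx1 : Real.Gamma (x + 1) = x * Real.Gamma x := Real.Gamma_add_one hx.ne'
  have hGx1pos : 0 < Real.Gamma (x + 1) := Real.Gamma_pos_of_pos (by linarith)
  calc x * Real.Gamma x = Real.exp (Real.log (Real.Gamma (x + 1))) := by
        rw [Real.exp_log hGx1pos, hGx1]
    _ ≤ Real.exp (Real.log (Real.Gamma (x + α)) + (1 - α) * Real.log (x + α)) :=
        Real.exp_le_exp.2 h2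
    _ = Real.Gamma (x + α) * (x + α) ^ (1 - α) := by
        rw [Real.exp_add, Real.exp_log hGpos, Real.rpow_def_of_pos hxα, mul_comm (1-α)]

lemma bound_tendsto {α : ℝ} (hα0 : 0 < α) :
    Tendsto (fun y : ℝ => (y + α) ^ (1 - α) / y) atTop (𝓝 0) := by
  have h1 : Tendsto (fun y : ℝ => (y + α) ^ (-α)) atTop (𝓝 0) :=
    (tendsto_rpow_neg_atTop hα0).comp (tendsto_atTop_add_const_right atTop α tendsto_id)
  have h2 : Tendsto (fun y : ℝ => (y + α) / y) atTop (𝓝 1) := by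
    have : Tendsto (fun y : ℝ => 1 + α / y) atTop (𝓝 1) := by
      simpa using tendsto_const_nhds.add (tendsto_const_nhds.div_atTop (tendsto_id (α := ℝ)))
    refine this.congr' ?_
    filter_upwards [eventually_gt_atTop (0:ℝ)] with y hy
    field_simp
  have := h1.mul h2
  rw [zero_mul] at this
  refine this.congr' ?_
  filter_upwards [eventually_gt_atTop (0:ℝ)] with y hy
  have hyα : 0 < y + α := by linarith
  rw [show (1:ℝ) - α = 1 + (-α) by ring, Real.rpow_add hyα, Real.rpow_one]
  field_simp

lemma mlCoeff_ratio_tendsto {α : ℝ} (hα0 : 0 < α) (hα1 : α < 1) :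
    Tendsto (fun n : ℕ => ‖mlCoeff α (n + 1)‖ / ‖mlCoeff α n‖) atTop (𝓝 0) := by
  have hx : ∀ n : ℕ, (0:ℝ) < α * n + 1 := fun n => by positivity
  -- the ratio equals Γ(x)/Γ(x+α) with x = α n + 1
  have key : ∀ n : ℕ, ‖mlCoeff α (n + 1)‖ / ‖mlCoeff α n‖
      ≤ ((α * n + 1) + α) ^ (1 - α) / (α * n + 1) := by
    intro n
    have hxn := hx n
    have hG1 : 0 < Real.Gamma (α * n + 1) := Real.Gamma_pos_of_pos hxn
    have hG2 : 0 < Real.Gamma ((α * n + 1) + α) := Real.Gamma_pos_of_pos (by linarith)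
    have hle := gamma_mul_le hα0 hα1 hxn
    have harg : α * (n + 1 : ℕ) + 1 = (α * n + 1) + α := by push_cast; ring
    have hval : ‖mlCoeff α (n + 1)‖ / ‖mlCoeff α n‖
        = Real.Gamma (α * n + 1) / Real.Gamma ((α * n + 1) + α) := by
      rw [mlCoeff, mlCoeff, harg, Real.norm_eq_abs, Real.norm_eq_abs,
        abs_of_pos (inv_pos.2 hG2), abs_of_pos (inv_pos.2 hG1)]
      field_simp
    rw [hval, div_le_div_iff₀ hG2 hxn]
    nlinarith [hle]
  have hnonneg : ∀ n : ℕ, (0:ℝ) ≤ ‖mlCoeff α (n + 1)‖ / ‖mlCoeff α n‖ := fun n => by positivity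
  refine squeeze_zero hnonneg key ?_
  exact (bound_tendsto hα0).comp
    ((tendsto_natCast_atTop_atTop.const_mul_atTop hα0).atTop_add tendsto_const_nhds)

lemma ml_eq (α : ℝ) (x : ℝ) :
    mittagLeffler α 1 x = ofScalarsSum (mlCoeff α) x := by
  rw [mittagLeffler, ofScalars_sum_eq]
  exact tsum_congr fun k => by rw [mlCoeff, smul_eq_mul, div_eq_inv_mul, mul_comm]

lemma ml_radius_top {α : ℝ} (hα0 : 0 < α) (hα1 : α < 1) :
    (ofScalars ℝ (mlCoeff α)).radius = ⊤ :=
  ofScalars_radius_eq_top_of_tendsto ℝ _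
    (Eventually.of_forall fun n => (mlCoeff_pos hα0 n).ne')
    (mlCoeff_ratio_tendsto hα0 hα1)

lemma ml_hasFPowerSeries {α : ℝ} (hα0 : 0 < α) (hα1 : α < 1) :
    HasFPowerSeriesOnBall (ofScalarsSum (mlCoeff α)) (ofScalars ℝ (mlCoeff α)) 0 ⊤ := by
  have := (ofScalars ℝ (mlCoeff α)).hasFPowerSeriesOnBall
    (by rw [ml_radius_top hα0 hα1]; exact ENNReal.zero_lt_top)
  rwa [ml_radius_top hα0 hα1] at this

lemma ml_analyticAt {α : ℝ} (hα0 : 0 < α) (hα1 : α < 1) (y : ℝ) :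
    AnalyticAt ℝ (ofScalarsSum (mlCoeff α)) y :=
  (ml_hasFPowerSeries hα0 hα1).analyticAt_of_mem (by simp [EMetric.mem_ball, edist_lt_top])

lemma ml_deriv {α : ℝ} (hα0 : 0 < α) (hα1 : α < 1) :
    HasDerivAt (ofScalarsSum (mlCoeff α)) (mlCoeff α 1) 0 := by
  have := (ml_hasFPowerSeries hα0 hα1).hasFPowerSeriesAt.hasDerivAt
  have h2 : (ofScalars ℝ (mlCoeff α)) 1 (fun _ => (1:ℝ)) = mlCoeff α 1 • (1:ℝ) ^ (1:ℕ) :=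
    ofScalars_apply_eq (mlCoeff α) (1:ℝ) 1
  rw [one_pow, smul_eq_mul, mul_one] at h2
  rwa [h2] at this

lemma ml_zero (α : ℝ) : ofScalarsSum (mlCoeff α) (0:ℝ) = 1 := by
  rw [ofScalars_sum_eq]
  rw [tsum_eq_single 0 (fun k hk => by rw [zero_pow hk, smul_zero])]
  rw [pow_zero, smul_eq_mul, mul_one, mlCoeff]
  norm_num [Real.Gamma_one]

lemma slope_limit {α lam : ℝ} (hα0 : 0 < α) (hα1 : α < 1) (hlam : 0 < lam) :
    Tendsto (fun t : ℝ => (mittagLeffler α 1 (-lam * t ^ α) - 1) / t ^ α)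
      (𝓝[>] (0:ℝ)) (𝓝 (-(lam * mlCoeff α 1))) := by
  set g : ℝ → ℝ := ofScalarsSum (mlCoeff α) with hg
  have hslope : Tendsto (slope g 0) (𝓝[≠] (0:ℝ)) (𝓝 (mlCoeff α 1)) :=
    hasDerivAt_iff_tendsto_slope.1 (ml_deriv hα0 hα1)
  set φ : ℝ → ℝ := fun t => -lam * t ^ α with hφ
  have hφt : Tendsto φ (𝓝[>] (0:ℝ)) (𝓝[≠] (0:ℝ)) := by
    rw [tendsto_nhdsWithin_iff]
    constructor
    · have hc : ContinuousAt (fun t : ℝ => t ^ α) 0 :=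
        Real.continuousAt_rpow_const 0 α (Or.inr hα0.le)
      have h0 : Tendsto (fun t : ℝ => t ^ α) (𝓝[>] (0:ℝ)) (𝓝 ((0:ℝ) ^ α)) :=
        hc.tendsto.mono_left nhdsWithin_le_nhds
      have := h0.const_mul (-lam)
      rw [Real.zero_rpow hα0.ne', mul_zero] at this
      exact this
    · filter_upwards [self_mem_nhdsWithin] with t ht
      have : 0 < t ^ α := Real.rpow_pos_of_pos ht α
      simp only [Set.mem_compl_iff, Set.mem_singleton_iff, hφ]
      nlinarith
  have h1 : Tendsto (fun t => slope g 0 (φ t) * (-lam)) (𝓝[>] (0:ℝ))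
      (𝓝 (mlCoeff α 1 * (-lam))) := (hslope.comp hφt).mul_const (-lam)
  rw [show mlCoeff α 1 * (-lam) = -(lam * mlCoeff α 1) by ring] at h1
  refine h1.congr' ?_
  filter_upwards [self_mem_nhdsWithin] with t ht
  have htα : 0 < t ^ α := Real.rpow_pos_of_pos ht α
  have hg0 : g 0 = 1 := ml_zero α
  have hgt : g (φ t) = mittagLeffler α 1 (-lam * t ^ α) := (ml_eq α _).symm
  rw [slope_def_field, hg0, hgt, hφ]
  field_simp
  ring

lemma aux_uniq {α β lam ρ : ℝ} (hα : α ∈ Set.Ioo (0:ℝ) 1) (hβ : β ∈ Set.Ioo (0:ℝ) 1)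
    (hlam : 0 < lam) (hρ : 0 < ρ) (hle : α ≤ β)
    (heq : ∀ t ∈ Set.Ioi (0:ℝ),
      mittagLeffler α 1 (-lam * t ^ α) = mittagLeffler β 1 (-ρ * t ^ β)) :
    α = β ∧ lam = ρ := by
  have L1 := slope_limit hα.1 hα.2 hlam
  have L2 := slope_limit hβ.1 hβ.2 hρ
  rcases eq_or_lt_of_le hle with heq' | hlt
  · subst heq'
    refine ⟨rfl, ?_⟩
    have L1' : Tendsto (fun t : ℝ => (mittagLeffler α 1 (-ρ * t ^ α) - 1) / t ^ α)
        (𝓝[>] (0:ℝ)) (𝓝 (-(lam * mlCoeff α 1))) := by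
      refine L1.congr' ?_
      filter_upwards [self_mem_nhdsWithin] with t ht
      rw [heq t ht]
    have := tendsto_nhds_unique L1' L2
    have hc := mlCoeff_pos hα.1 1
    have : lam * mlCoeff α 1 = ρ * mlCoeff α 1 := by linarith [neg_injective this]
    exact mul_right_cancel₀ hc.ne' this
  · exfalso
    have hT : Tendsto (fun t : ℝ => t ^ (β - α)) (𝓝[>] (0:ℝ)) (𝓝 0) := by
      have hc : ContinuousAt (fun t : ℝ => t ^ (β - α)) 0 :=
        Real.continuousAt_rpow_const 0 (β - α) (Or.inr (by linarith))
      have h0 : Tendsto (fun t : ℝ => t ^ (β - α)) (𝓝[>] (0:ℝ)) (𝓝 ((0:ℝ) ^ (β - α))) :=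
        hc.tendsto.mono_left nhdsWithin_le_nhds
      rwa [Real.zero_rpow (by linarith : β - α ≠ 0)] at h0
    have hprod := L2.mul hT
    rw [mul_zero] at hprod
    have L1'' : Tendsto (fun t : ℝ => (mittagLeffler α 1 (-lam * t ^ α) - 1) / t ^ α)
        (𝓝[>] (0:ℝ)) (𝓝 0) := by
      refine hprod.congr' ?_
      filter_upwards [self_mem_nhdsWithin] with t ht
      have htβ : (0:ℝ) < t ^ β := Real.rpow_pos_of_pos ht β
      have htα : (0:ℝ) < t ^ α := Real.rpow_pos_of_pos ht α
      rw [heq t ht, Real.rpow_sub ht]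
      field_simp
    have := tendsto_nhds_unique L1 L1''
    have hc := mlCoeff_pos hα.1 1
    nlinarith

lemma exp_analytic {α lam : ℝ} (hα : α ∈ Set.Ioo (0:ℝ) 1) (s : ℝ) :
    AnalyticAt ℝ (fun s : ℝ => ofScalarsSum (mlCoeff α) (-lam * Real.exp (α * s))) s := by
  have hinner : AnalyticAt ℝ (fun s : ℝ => -lam * Real.exp (α * s)) s :=
    analyticAt_const.mul ((analyticAt_const.mul analyticAt_id).rexp)
  exact (ml_analyticAt hα.1 hα.2 _).comp hinner

/-- Single-eigenmode uniqueness: if `E_{α,1}(−λ t^α) = E_{β,1}(−ρ t^β)` on a nonempty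
open interval `(a,b) ⊂ (0,∞)`, then `α = β` and `λ = ρ`. -/
theorem eigenmode_uniqueness (α β lam ρ a b : ℝ)
    (hα : α ∈ Set.Ioo (0 : ℝ) 1) (hβ : β ∈ Set.Ioo (0 : ℝ) 1)
    (hlam : 0 < lam) (hρ : 0 < ρ) (ha : 0 < a) (hab : a < b)
    (h : ∀ t ∈ Set.Ioo a b,
      mittagLeffler α 1 (-lam * t ^ α) = mittagLeffler β 1 (-ρ * t ^ β)) :
    α = β ∧ lam = ρ := by
  set F : ℝ → ℝ := fun s => ofScalarsSum (mlCoeff α) (-lam * Real.exp (α * s)) with hF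
  set G : ℝ → ℝ := fun s => ofScalarsSum (mlCoeff β) (-ρ * Real.exp (β * s)) with hG
  have hFa : AnalyticOnNhd ℝ F Set.univ := fun s _ => exp_analytic hα s
  have hGa : AnalyticOnNhd ℝ G Set.univ := fun s _ => exp_analytic hβ s
  -- rewriting: for any s, exp (α * s) = (exp s) ^ α
  have hexp : ∀ (γ s : ℝ), Real.exp (γ * s) = Real.exp s ^ γ := by
    intro γ s
    rw [Real.rpow_def_of_pos (Real.exp_pos s), Real.log_exp, mul_comm]
  have hlog : Real.log a < Real.log b := Real.log_lt_log ha hab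
  set s₀ : ℝ := (Real.log a + Real.log b) / 2 with hs₀
  have hfg : F =ᶠ[𝓝 s₀] G := by
    filter_upwards [isOpen_Ioo.mem_nhds (show s₀ ∈ Set.Ioo (Real.log a) (Real.log b) by
      constructor <;> (simp only [hs₀]; linarith))] with s hs
    have hmem : Real.exp s ∈ Set.Ioo a b := by
      constructor
      · rw [← Real.exp_log ha]; exact Real.exp_lt_exp.2 hs.1
      · rw [← Real.exp_log (lt_trans ha hab)]; exact Real.exp_lt_exp.2 hs.2
    have := h (Real.exp s) hmem
    simp only [hF, hG, ← ml_eq, hexp]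
    exact this
  have hFG : F = G := AnalyticOnNhd.eq_of_eventuallyEq hFa hGa hfg
  have heq : ∀ t ∈ Set.Ioi (0:ℝ),
      mittagLeffler α 1 (-lam * t ^ α) = mittagLeffler β 1 (-ρ * t ^ β) := by
    intro t ht
    have := congrFun hFG (Real.log t)
    simp only [hF, hG, hexp, Real.exp_log ht, ← ml_eq] at this
    exact this
  rcases le_total α β with hle | hle
  · exact aux_uniq hα hβ hlam hρ hle heq
  · obtain ⟨h1, h2⟩ := aux_uniq hβ hα hρ hlam hle (fun t ht => (heq t ht).symm)
    exact ⟨h1.symm, h2.symm⟩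
end

section
/- Let μ, ω : [0,1] → ℝ be continuous functions, and suppose there exist 0 < s₁ < s₂ such that ∫_0^1 μ(α) s^α dα = ∫_0^1 ω(α) s^α dα for every s ∈ (s₁, s₂). Then μ(α) = ω(α) for every α ∈ [0,1]. (This injectivity of the weight function ↦ Laplace-symbol map is the core uniqueness mechanism in the determination of the weight μ of the distributed order derivative from point observation data.) -/
/-!
Write `s = exp t`. The difference of the two symbols becomes
`G t = ∫₀¹ (μ - ω)(a) exp (a t) da`, an entire function of `t` whose Taylor coefficients at `0`
are the moments `∫₀¹ (μ - ω)(a) aⁿ da / n!`. Since `G` vanishes on the open interval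
`(log s₁, log s₂)`, the identity theorem makes it vanish identically, so every moment of
`μ - ω` is zero. By Weierstrass approximation `μ - ω` is then orthogonal to itself in `L²`,
and being continuous it vanishes on `[0, 1]`.
-/

open MeasureTheory Set Filter Real Topology
open scoped Nat

theorem hasFPowerSeriesOnBall_ofScalars_of_forall_hasSum {𝕜 : Type*} [RCLike 𝕜] {c : ℕ → 𝕜}
    {f : 𝕜 → 𝕜} (h : ∀ y, HasSum (fun n => c n * y ^ n) (f y)) :
    HasFPowerSeriesOnBall f (FormalMultilinearSeries.ofScalars 𝕜 c) 0 ⊤ where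
  r_le := le_of_eq <| Eq.symm <| ENNReal.eq_top_of_forall_nnreal_le fun r => by
    refine FormalMultilinearSeries.le_radius_of_tendsto _ (l := 0) ?_
    simpa [FormalMultilinearSeries.ofScalars_norm] using
      (h ((r : ℝ) : 𝕜)).summable.tendsto_atTop_zero.norm
  r_pos := ENNReal.zero_lt_top
  hasSum := fun {y} _ => by
    simpa [FormalMultilinearSeries.ofScalars_apply_eq, mul_comm] using h y

theorem hasSum_integral_mul_exp {f : ℝ → ℝ} {a b : ℝ} (hf : IntervalIntegrable f volume a b)
    (t : ℝ) :
    HasSum (fun n => (∫ x in a..b, f x * x ^ n) / n ! * t ^ n)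
      (∫ x in a..b, f x * rexp (x * t)) := by
  have hexp (y : ℝ) : HasSum (fun n => y ^ n / n !) (rexp y) := by
    simpa [Real.exp_eq_exp_ℝ] using NormedSpace.expSeries_div_hasSum_exp y
  have hterm (n : ℕ) : ∫ x in a..b, f x * ((x * t) ^ n / n !)
      = (∫ x in a..b, f x * x ^ n) / n ! * t ^ n := by
    simp_rw [mul_pow, ← intervalIntegral.integral_div, ← intervalIntegral.integral_mul_const]
    congr 1 with x
    ring
  simp_rw [← hterm]
  refine intervalIntegral.hasSum_integral_of_dominated_convergence
    (fun n x => |f x| * (|x * t| ^ n / n !)) (fun n => ?_) (fun n => ?_) ?_ ?_ ?_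
  · exact (hf.mul_continuousOn (g := fun x => (x * t) ^ n / n !)
      (by fun_prop)).def'.aestronglyMeasurable
  · refine ae_of_all _ fun x _ => ?_
    simp [abs_mul]
  · exact ae_of_all _ fun x _ => (Real.summable_pow_div_factorial _).mul_left _
  · simp_rw [tsum_mul_left, (hexp _).tsum_eq]
    exact hf.abs.mul_continuousOn (by fun_prop)
  · exact ae_of_all _ fun x _ => (hexp _).mul_left _

theorem integral_mul_pow_eq_zero_of_eqOn_zero {f : ℝ → ℝ} {a b : ℝ}
    (hf : IntervalIntegrable f volume a b) {U : Set ℝ} (hU : IsOpen U) (hU₀ : U.Nonempty)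
    (h : EqOn (fun t => ∫ x in a..b, f x * rexp (x * t)) 0 U) (n : ℕ) :
    ∫ x in a..b, f x * x ^ n = 0 := by
  obtain ⟨t₀, ht₀⟩ := hU₀
  have hG := hasFPowerSeriesOnBall_ofScalars_of_forall_hasSum (hasSum_integral_mul_exp hf)
  have hG_zero : (fun t => ∫ x in a..b, f x * rexp (x * t)) = 0 := by
    have hfreq : ∃ᶠ t in 𝓝[≠] t₀, ∫ x in a..b, f x * rexp (x * t) = 0 :=
      (eventually_nhdsWithin_of_eventually_nhds
        (mem_of_superset (hU.mem_nhds ht₀) h)).frequently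
    have := hG.analyticOnNhd.eqOn_zero_of_preconnected_of_frequently_eq_zero
      (by simpa using isPreconnected_univ) (by simp) hfreq
    exact funext fun t => this (by simp)
  have hc := (FormalMultilinearSeries.ofScalars_eq_zero ℝ n).mp
    (congrFun (hG_zero ▸ hG.hasFPowerSeriesAt).eq_zero n)
  simpa [Nat.factorial_ne_zero] using hc

open Polynomial in
theorem integral_mul_eval_eq_zero_of_integral_mul_pow_eq_zero {f : ℝ → ℝ} {a b : ℝ}
    (hf : IntervalIntegrable f volume a b) (h : ∀ n : ℕ, ∫ x in a..b, f x * x ^ n = 0)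
    (p : ℝ[X]) : ∫ x in a..b, f x * p.eval x = 0 := by
  simp_rw [eval_eq_sum_range, Finset.mul_sum, mul_left_comm (f _)]
  rw [intervalIntegral.integral_finsetSum fun i _ =>
    (hf.mul_continuousOn (continuous_pow i).continuousOn).const_mul _]
  simp [h]

theorem integral_mul_self_eq_zero_of_integral_mul_pow_eq_zero {f : ℝ → ℝ} {a b : ℝ}
    (hab : a < b) (hf : ContinuousOn f (Icc a b)) (h : ∀ n : ℕ, ∫ x in a..b, f x * x ^ n = 0) :
    ∫ x in a..b, f x * f x = 0 := by
  have hfi : IntervalIntegrable f volume a b := hf.intervalIntegrable_of_Icc hab.le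
  have hf' : ContinuousOn f (uIcc a b) := uIcc_of_le hab.le ▸ hf
  have hba : 0 < b - a := sub_pos.2 hab
  obtain ⟨C, hC⟩ := isCompact_Icc.exists_bound_of_continuousOn hf
  refine eq_of_forall_dist_le fun ε hε => ?_
  set δ := ε / ((|C| + 1) * (b - a)) with hδ
  obtain ⟨p, hp⟩ := exists_polynomial_near_of_continuousOn a b f hf δ (by positivity)
  have hbound : ∀ x ∈ uIoc a b, ‖f x * (f x - p.eval x)‖ ≤ (|C| + 1) * δ := by
    intro x hx
    rw [uIoc_of_le hab.le] at hx
    rw [norm_mul, norm_sub_rev]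
    gcongr
    · exact (hC x (Ioc_subset_Icc_self hx)).trans (by linarith [le_abs_self C])
    · exact (hp x (Ioc_subset_Icc_self hx)).le
  have hsplit : ∫ x in a..b, f x * f x = ∫ x in a..b, f x * (f x - p.eval x) := by
    simp_rw [mul_sub]
    rw [intervalIntegral.integral_sub (hfi.mul_continuousOn hf')
      (hfi.mul_continuousOn p.continuous.continuousOn),
      integral_mul_eval_eq_zero_of_integral_mul_pow_eq_zero hfi h p, sub_zero]
  calc dist (∫ x in a..b, f x * f x) 0 = ‖∫ x in a..b, f x * (f x - p.eval x)‖ := by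
        rw [dist_zero_right, hsplit]
    _ ≤ (|C| + 1) * δ * |b - a| := intervalIntegral.norm_integral_le_of_norm_le_const hbound
    _ = ε := by rw [abs_of_pos hba, hδ]; field_simp

theorem eqOn_zero_of_integral_mul_pow_eq_zero {f : ℝ → ℝ} {a b : ℝ} (hab : a < b)
    (hf : ContinuousOn f (Icc a b)) (h : ∀ n : ℕ, ∫ x in a..b, f x * x ^ n = 0) :
    EqOn f 0 (Icc a b) := by
  have hae : (fun x => f x * f x) =ᵐ[volume.restrict (Icc a b)] 0 := by
    rw [← Measure.restrict_congr_set Ioc_ae_eq_Icc]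
    refine (intervalIntegral.integral_eq_zero_iff_of_le_of_nonneg_ae hab.le
      (ae_of_all _ fun x => mul_self_nonneg (f x)) ?_).mp
      (integral_mul_self_eq_zero_of_integral_mul_pow_eq_zero hab hf h)
    exact (hf.mul hf).intervalIntegrable_of_Icc hab.le
  intro x hx
  exact mul_self_eq_zero.mp
    (Measure.eqOn_Icc_of_ae_eq volume hab.ne hae (hf.mul hf) continuousOn_const hx)

/-- Injectivity of the weight-to-Laplace-symbol map for distributed order derivatives:
if `μ, ω` are continuous on `[0,1]` and `∫_0^1 μ(α) s^α dα = ∫_0^1 ω(α) s^α dα` for all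
`s` in some nonempty open interval `(s₁, s₂) ⊂ (0,∞)`, then `μ = ω` on `[0,1]`. -/
theorem weight_symbol_injective (μ ω : ℝ → ℝ)
    (hμ : ContinuousOn μ (Set.Icc 0 1)) (hω : ContinuousOn ω (Set.Icc 0 1))
    (s₁ s₂ : ℝ) (hs₁ : 0 < s₁) (hs₁₂ : s₁ < s₂)
    (h : ∀ s ∈ Set.Ioo s₁ s₂,
      (∫ a in (0 : ℝ)..1, μ a * s ^ a) = ∫ a in (0 : ℝ)..1, ω a * s ^ a) :
    ∀ a ∈ Set.Icc (0 : ℝ) 1, μ a = ω a := by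
  have hf : ContinuousOn (fun a => μ a - ω a) (Icc 0 1) := hμ.sub hω
  have hsymbol : EqOn (fun t => ∫ a in (0 : ℝ)..1, (μ a - ω a) * rexp (a * t)) 0
      (Ioo (log s₁) (log s₂)) := by
    rintro t ⟨ht₁, ht₂⟩
    have hs : rexp t ∈ Ioo s₁ s₂ :=
      ⟨(log_lt_iff_lt_exp hs₁).mp ht₁, (lt_log_iff_exp_lt (hs₁.trans hs₁₂)).mp ht₂⟩
    have hexp (a : ℝ) : rexp t ^ a = rexp (a * t) := by rw [← exp_mul, mul_comm]
    have hint {g : ℝ → ℝ} (hg : ContinuousOn g (Icc 0 1)) :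
        IntervalIntegrable (fun a => g a * rexp (a * t)) volume 0 1 :=
      (hg.mul (by fun_prop)).intervalIntegrable_of_Icc zero_le_one
    simp_rw [Pi.zero_apply, sub_mul]
    rw [intervalIntegral.integral_sub (hint hμ) (hint hω), sub_eq_zero]
    simpa only [hexp] using h _ hs
  have hmoments := integral_mul_pow_eq_zero_of_eqOn_zero
    (hf.intervalIntegrable_of_Icc zero_le_one) isOpen_Ioo
    (nonempty_Ioo.mpr (log_lt_log hs₁ hs₁₂)) hsymbol
  exact fun a ha =>
    sub_eq_zero.mp (eqOn_zero_of_integral_mul_pow_eq_zero zero_lt_one hf hmoments ha)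
end

section
/- Let 0 < δ < 1/2, T > 0, and λ > 0. Then there exists a constant C > 0, depending only on δ, T, λ, such that for all α, β ∈ [δ, 1−δ] and all t ∈ (0, T], |E_{α,1}(−λ t^α) − E_{β,1}(−λ t^β)| ≤ C |α − β|. (This Lipschitz continuity of each eigenmode of the solution with respect to the fractional order yields the Lipschitz estimate ‖(u[α,p] − u[β,q])(x₀,·)‖_{L²(0,T)} ≤ C Σ_j (|α_j − β_j| + |p_j − q_j|) that guarantees the existence of a minimizer of the output least-squares functional for the order-reconstruction problem.) -/
open Real Filter Set

lemma abs_exp_sub_exp_le (u v : ℝ) :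
    |Real.exp u - Real.exp v| ≤ max (Real.exp u) (Real.exp v) * |u - v| := by
  wlog h : v ≤ u generalizing u v
  · rw [abs_sub_comm, abs_sub_comm u v, max_comm]
    exact this v u (le_of_not_ge h)
  rw [abs_of_nonneg (sub_nonneg.2 (Real.exp_le_exp.2 h)), abs_of_nonneg (sub_nonneg.2 h)]
  have h1 := Real.add_one_le_exp (v - u)
  have h2 : Real.exp (v - u) * Real.exp u = Real.exp v := by
    rw [← Real.exp_add]; ring_nf
  nlinarith [Real.exp_pos u, Real.exp_pos v, le_max_left (Real.exp u) (Real.exp v),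
    sub_nonneg.2 h]

lemma logGamma_slope_ge {x y : ℝ} (hx : 1 ≤ x) (hxy : x < y) :
    -3 * (y - x) ≤ Real.log (Real.Gamma y) - Real.log (Real.Gamma x) := by
  have hconv := Real.convexOn_log_Gamma
  have key : ∀ z : ℝ, 1 < z →
      (-3 : ℝ) ≤ (Real.log (Real.Gamma z) - Real.log (Real.Gamma 1)) / (z - 1) := by
    intro z hz
    have h := hconv.slope_mono_adjacent (show (1/2 : ℝ) ∈ Set.Ioi 0 by norm_num)
      (show z ∈ Set.Ioi 0 by simp only [Set.mem_Ioi]; linarith) (by norm_num) hz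
    simp only [Function.comp_apply] at h
    have hg1 : Real.Gamma 1 = 1 := Real.Gamma_one
    have hg12 : Real.Gamma (1/2) = Real.sqrt π := Real.Gamma_one_half_eq
    rw [hg1, Real.log_one] at h ⊢
    have hslope : (Real.log (Real.Gamma 1) - Real.log (Real.Gamma (1/2))) / (1 - 1/2)
        = - Real.log π := by
      rw [hg1, Real.log_one, hg12, Real.log_sqrt Real.pi_pos.le]; ring
    rw [hg1, Real.log_one] at hslope
    rw [hslope] at h
    have hπ : Real.log π ≤ 3 := by
      have := Real.log_le_sub_one_of_pos Real.pi_pos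
      have := Real.pi_le_four
      linarith
    linarith
  rcases eq_or_lt_of_le hx with rfl | hx1
  · have h3 := key y hxy
    rw [le_div_iff₀ (by linarith : (0:ℝ) < y - 1)] at h3
    linarith
  · have h := hconv.slope_mono_adjacent (show (1:ℝ) ∈ Set.Ioi 0 by norm_num)
      (show y ∈ Set.Ioi 0 by simp only [Set.mem_Ioi]; linarith) hx1 hxy
    simp only [Function.comp_apply, Real.Gamma_one, Real.log_one] at h
    have h2 := key x hx1
    rw [Real.Gamma_one, Real.log_one] at h2
    have h4 : (-3 : ℝ) ≤ (Real.log (Real.Gamma y) - Real.log (Real.Gamma x)) / (y - x) :=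
      le_trans h2 (by simpa using h)
    rw [le_div_iff₀ (by linarith : (0:ℝ) < y - x)] at h4
    linarith



lemma logGamma_slope_le {x y : ℝ} (hx : 1 ≤ x) (hxy : x < y) :
    Real.log (Real.Gamma y) - Real.log (Real.Gamma x) ≤ Real.log y * (y - x) := by
  have hconv := Real.convexOn_log_Gamma
  have hy0 : (0:ℝ) < y := by linarith
  have h := hconv.slope_mono_adjacent (show x ∈ Set.Ioi 0 by simp only [Set.mem_Ioi]; linarith)
    (show y + 1 ∈ Set.Ioi 0 by simp only [Set.mem_Ioi]; linarith) hxy (by linarith)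
  simp only [Function.comp_apply] at h
  have hG : Real.Gamma (y + 1) = y * Real.Gamma y := Real.Gamma_add_one hy0.ne'
  have hlog : Real.log (Real.Gamma (y+1)) - Real.log (Real.Gamma y) = Real.log y := by
    rw [hG, Real.log_mul hy0.ne' (Real.Gamma_pos_of_pos hy0).ne']; ring
  have h2 : (Real.log (Real.Gamma y) - Real.log (Real.Gamma x)) / (y - x) ≤ Real.log y := by
    calc _ ≤ (Real.log (Real.Gamma (y+1)) - Real.log (Real.Gamma y)) / (y + 1 - y) := h
      _ = Real.log y := by rw [show y + 1 - y = 1 by ring, div_one, hlog]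
  rw [div_le_iff₀ (by linarith : (0:ℝ) < y - x)] at h2
  linarith [h2]

lemma abs_logGamma_sub_le {x y : ℝ} (hx : 1 ≤ x) (hxy : x ≤ y) :
    |Real.log (Real.Gamma y) - Real.log (Real.Gamma x)| ≤ (y + 3) * (y - x) := by
  rcases eq_or_lt_of_le hxy with rfl | h
  · simp
  have hy0 : (0:ℝ) < y := by linarith
  have h1 := logGamma_slope_ge hx h
  have h2 := logGamma_slope_le hx h
  have h3 : Real.log y ≤ y - 1 := Real.log_le_sub_one_of_pos hy0
  rw [abs_le]
  constructor <;> nlinarith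

lemma Gamma_le_one_of {x : ℝ} (h1 : 1 ≤ x) (h2 : x ≤ 2) : Real.Gamma x ≤ 1 := by
  have hconv := Real.convexOn_log_Gamma
  have hx0 : (0:ℝ) < x := by linarith
  have key := hconv.2 (show (1:ℝ) ∈ Set.Ioi 0 by norm_num)
    (show (2:ℝ) ∈ Set.Ioi 0 by norm_num)
    (show (0:ℝ) ≤ 2 - x by linarith) (show (0:ℝ) ≤ x - 1 by linarith)
    (show (2 - x) + (x - 1) = 1 by ring)
  have hxc : (2 - x) • (1:ℝ) + (x - 1) • (2:ℝ) = x := by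
    simp only [smul_eq_mul]; ring
  rw [hxc] at key
  simp only [Function.comp_apply, smul_eq_mul, Real.Gamma_one, Real.Gamma_two,
    Real.log_one, mul_zero, add_zero] at key
  have : Real.log (Real.Gamma x) ≤ 0 := by linarith
  calc Real.Gamma x = Real.exp (Real.log (Real.Gamma x)) :=
        (Real.exp_log (Real.Gamma_pos_of_pos hx0)).symm
    _ ≤ Real.exp 0 := Real.exp_le_exp.2 this
    _ = 1 := Real.exp_zero

lemma exp_neg_three_le_Gamma {x : ℝ} (hx : 1 ≤ x) : Real.exp (-3) ≤ Real.Gamma x := by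
  have hx0 : (0:ℝ) < x := by linarith
  rcases le_or_gt x 2 with h2 | h2
  · rcases eq_or_lt_of_le hx with rfl | h1
    · rw [Real.Gamma_one]; exact (Real.exp_le_one_iff.2 (by norm_num)).trans le_rfl
    · have := logGamma_slope_ge le_rfl h1
      rw [Real.Gamma_one, Real.log_one] at this
      have hlog : (-3 : ℝ) ≤ Real.log (Real.Gamma x) := by nlinarith
      calc Real.exp (-3) ≤ Real.exp (Real.log (Real.Gamma x)) := Real.exp_le_exp.2 hlog
        _ = Real.Gamma x := Real.exp_log (Real.Gamma_pos_of_pos hx0)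
  · have : Real.Gamma 2 ≤ Real.Gamma x :=
      (Real.Gamma_strictMonoOn_Ici (by norm_num) (by simpa using h2.le) h2).le
    rw [Real.Gamma_two] at this
    exact le_trans (by exact (Real.exp_le_one_iff.2 (by norm_num))) this

lemma Gamma_ge_scaled {s x : ℝ} (hs : 1 ≤ s) (hsx : s ≤ x) :
    Real.exp (-3) * Real.Gamma s ≤ Real.Gamma x := by
  have hs0 : (0:ℝ) < s := by linarith
  have hx1 : (1:ℝ) ≤ x := hs.trans hsx
  rcases le_or_gt 2 s with h2 | h2
  · have hmono : Real.Gamma s ≤ Real.Gamma x := by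
      rcases eq_or_lt_of_le hsx with rfl | h
      · exact le_rfl
      · exact (Real.Gamma_strictMonoOn_Ici (by simpa using h2) (by simp; linarith) h).le
    have := Real.Gamma_pos_of_pos hs0
    nlinarith [Real.exp_pos (-3:ℝ), Real.exp_le_one_iff.2 (by norm_num : (-3:ℝ) ≤ 0)]
  · have hle : Real.Gamma s ≤ 1 := Gamma_le_one_of hs h2.le
    have := exp_neg_three_le_Gamma hx1
    nlinarith [Real.exp_pos (-3:ℝ)]



set_option maxHeartbeats 800000 in
lemma summable_aux {δ y : ℝ} (hδ : 0 < δ) (hy : 0 < y) :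
    Summable (fun k : ℕ => y ^ k * ((k : ℝ) + 4) ^ 2 / Real.Gamma (δ * k + 1)) := by
  set w : ℝ := max (2 * y) 1 with hw
  have hw1 : (1:ℝ) ≤ w := le_max_right _ _
  have hw0 : (0:ℝ) < w := lt_of_lt_of_le one_pos hw1
  set p : ℕ := ⌈1 / δ⌉₊ with hp
  have hpge : 1 / δ ≤ (p : ℝ) := Nat.le_ceil _
  set v : ℝ := w ^ p with hv
  have hv1 : (1:ℝ) ≤ v := one_le_pow₀ hw1
  have hv0 : (0:ℝ) < v := lt_of_lt_of_le one_pos hv1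
  have hEv1 : ∀ᶠ n : ℕ in atTop, Real.exp 3 * v * v ^ n ≤ (Nat.factorial n : ℝ) := by
    have htend := (Real.summable_pow_div_factorial v).tendsto_atTop_zero
    have hε : (0:ℝ) < (Real.exp 3 * v)⁻¹ := by positivity
    filter_upwards [htend.eventually (gt_mem_nhds hε)] with n hn
    have hfac : (0:ℝ) < (Nat.factorial n : ℝ) := by positivity
    rw [div_lt_iff₀ hfac] at hn
    have h3 : (0:ℝ) < Real.exp 3 * v := by positivity
    calc Real.exp 3 * v * v ^ n ≤ Real.exp 3 * v * ((Real.exp 3 * v)⁻¹ * (Nat.factorial n : ℝ)) :=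
          mul_le_mul_of_nonneg_left hn.le h3.le
      _ = (Nat.factorial n : ℝ) := by field_simp
  have hfl : Tendsto (fun k : ℕ => ⌊δ * (k:ℝ)⌋₊) atTop atTop :=
    tendsto_nat_floor_atTop.comp ((tendsto_natCast_atTop_atTop).const_mul_atTop hδ)
  have hEv : ∀ᶠ k : ℕ in atTop,
      y ^ k * ((k:ℝ) + 4) ^ 2 / Real.Gamma (δ * k + 1) ≤ ((k:ℝ) + 4) ^ 2 * (1/2) ^ k := by
    filter_upwards [hfl.eventually hEv1] with k hk
    set n : ℕ := ⌊δ * (k:ℝ)⌋₊ with hn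
    have hδk0 : (0:ℝ) ≤ δ * k := by positivity
    -- Γ(δk+1) ≥ exp(-3) * n!
    have h1 : Real.exp (-3) * Real.Gamma ((n:ℝ) + 1) ≤ Real.Gamma (δ * k + 1) :=
      Gamma_ge_scaled (by have : (0:ℝ) ≤ (n:ℝ) := Nat.cast_nonneg n; linarith) (by
        have := Nat.floor_le hδk0
        linarith)
    rw [Real.Gamma_nat_eq_factorial n] at h1
    -- n! ≥ exp 3 * v^(n+1), so Γ(δk+1) ≥ v^(n+1)
    have h2 : v ^ (n + 1) ≤ Real.Gamma (δ * k + 1) := by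
      have : Real.exp (-3) * (Real.exp 3 * v * v ^ n) ≤ Real.exp (-3) * (Nat.factorial n : ℝ) :=
        mul_le_mul_of_nonneg_left hk (Real.exp_pos _).le
      have he1 : Real.exp (-3) * Real.exp 3 = 1 := by rw [← Real.exp_add]; norm_num
      have hee : Real.exp (-3) * (Real.exp 3 * v * v ^ n) = v ^ (n + 1) := by
        calc Real.exp (-3) * (Real.exp 3 * v * v ^ n)
            = (Real.exp (-3) * Real.exp 3) * (v * v ^ n) := by ring
          _ = v ^ (n + 1) := by rw [he1, one_mul, pow_succ]; ring
      rw [hee] at this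
      linarith
    -- v^(n+1) ≥ w^k ≥ (2y)^k
    have hkle : k ≤ p * (n + 1) := by
      have hlt : δ * (k:ℝ) < (n:ℝ) + 1 := by exact_mod_cast Nat.lt_floor_add_one (δ * (k:ℝ))
      have h0' : (0:ℝ) ≤ (n:ℝ) + 1 := by positivity
      have h1' : (k:ℝ) = (δ * k) * (1/δ) := by field_simp
      have h2' : (δ * (k:ℝ)) * (1/δ) ≤ ((n:ℝ)+1) * (1/δ) :=
        mul_le_mul_of_nonneg_right hlt.le (by positivity)
      have h3' : ((n:ℝ)+1) * (1/δ) ≤ ((n:ℝ)+1) * p :=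
        mul_le_mul_of_nonneg_left hpge h0'
      have hcast : (k:ℝ) ≤ ((p * (n+1) : ℕ) : ℝ) := by push_cast; nlinarith
      exact_mod_cast hcast
    have h3 : (2 * y) ^ k ≤ v ^ (n + 1) := by
      calc (2 * y) ^ k ≤ w ^ k := pow_le_pow_left₀ (by positivity) (le_max_left _ _) k
        _ ≤ w ^ (p * (n + 1)) := pow_le_pow_right₀ hw1 hkle
        _ = v ^ (n + 1) := by rw [hv, ← pow_mul]
    have hG : (2 * y) ^ k ≤ Real.Gamma (δ * k + 1) := h3.trans h2
    have hGpos : (0:ℝ) < Real.Gamma (δ * k + 1) := Real.Gamma_pos_of_pos (by positivity)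
    have h2y : (0:ℝ) < (2*y) ^ k := by positivity
    calc y ^ k * ((k:ℝ) + 4) ^ 2 / Real.Gamma (δ * k + 1)
        ≤ y ^ k * ((k:ℝ) + 4) ^ 2 / (2*y) ^ k := by
          apply div_le_div_of_nonneg_left (by positivity) h2y hG
      _ = ((k:ℝ) + 4) ^ 2 * (1/2) ^ k := by
          rw [mul_pow]
          field_simp
          rw [← mul_pow]; norm_num
  -- conclude
  have hg : Summable (fun k : ℕ => ((k:ℝ) + 4) ^ 2 * (1/2) ^ k) := by
    have h2 : Summable (fun n : ℕ => (n:ℝ)^2 * (1/2)^n) :=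
      summable_pow_mul_geometric_of_norm_lt_one 2 (by rw [Real.norm_eq_abs]; rw [abs_of_pos] <;> norm_num)
    have h1 : Summable (fun n : ℕ => (n:ℝ)^1 * (1/2)^n) :=
      summable_pow_mul_geometric_of_norm_lt_one 1 (by rw [Real.norm_eq_abs]; rw [abs_of_pos] <;> norm_num)
    have h0 : Summable (fun n : ℕ => ((1:ℝ)/2)^n) :=
      summable_geometric_of_lt_one (by norm_num) (by norm_num)
    refine Summable.congr ((h2.add (h1.mul_left 8)).add (h0.mul_left 16)) fun k => ?_
    push_cast; ring
  obtain ⟨N, hN⟩ := eventually_atTop.1 hEv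
  rw [← summable_nat_add_iff N]
  refine Summable.of_nonneg_of_le (fun k => ?_) (fun k => hN (k + N) (Nat.le_add_left N k))
    ((summable_nat_add_iff N).2 hg)
  have : (0:ℝ) < Real.Gamma (δ * (k + N : ℕ) + 1) := Real.Gamma_pos_of_pos (by positivity)
  positivity





set_option maxHeartbeats 1600000 in
lemma term_lip {δ T lam : ℝ} (hδ0 : 0 < δ) (hδ : δ < 1/2) (hT : 0 < T) (hlam : 0 < lam)
    {α β t : ℝ} (hα : α ∈ Set.Icc δ (1-δ)) (hβ : β ∈ Set.Icc δ (1-δ))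
    (ht : t ∈ Set.Ioc (0:ℝ) T) (k : ℕ) :
    |(-lam * t ^ α) ^ k / Real.Gamma (α * k + 1) -
      (-lam * t ^ β) ^ k / Real.Gamma (β * k + 1)| ≤
    3 * Real.exp 3 / δ * lam ^ k * (max T 1) ^ (k+1) * ((k:ℝ)+4)^2 / Real.Gamma (δ * k + 1)
      * |α - β| := by
  wlog hab : β ≤ α generalizing α β
  · rw [abs_sub_comm, abs_sub_comm α β]
    exact this hβ hα (le_of_not_ge hab)
  obtain ⟨hαl, hαu⟩ := hα
  obtain ⟨hβl, hβu⟩ := hβ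
  obtain ⟨ht0, htT⟩ := ht
  set M : ℝ := max T 1 with hM
  have hM1 : (1:ℝ) ≤ M := le_max_right _ _
  have hM0 : (0:ℝ) < M := lt_of_lt_of_le one_pos hM1
  have htM : t ≤ M := htT.trans (le_max_left _ _)
  have hk0 : (0:ℝ) ≤ (k:ℝ) := Nat.cast_nonneg k
  have hδα : δ ≤ α := hαl
  have hα1 : α ≤ 1 := by linarith
  have hβ1 : β ≤ 1 := by linarith
  have hGd : (0:ℝ) < Real.Gamma (δ * k + 1) := Real.Gamma_pos_of_pos (by positivity)
  have hGa : (0:ℝ) < Real.Gamma (α * k + 1) :=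
    Real.Gamma_pos_of_pos (by nlinarith [mul_nonneg (hδ0.le.trans hαl) hk0])
  have hGb : (0:ℝ) < Real.Gamma (β * k + 1) :=
    Real.Gamma_pos_of_pos (by nlinarith [mul_nonneg (hδ0.le.trans hβl) hk0])
  -- Gamma lower bounds
  have hGinv : ∀ a : ℝ, δ ≤ a → 1 / Real.Gamma (a * k + 1) ≤
      Real.exp 3 / Real.Gamma (δ * k + 1) := by
    intro a ha
    have hGx : (0:ℝ) < Real.Gamma (a * k + 1) :=
      Real.Gamma_pos_of_pos (by nlinarith)
    have h := Gamma_ge_scaled (s := δ * k + 1) (x := a * k + 1)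
      (by nlinarith) (by nlinarith)
    rw [div_le_div_iff₀ hGx hGd]
    have he : Real.exp 3 * Real.exp (-3) = 1 := by rw [← Real.exp_add]; norm_num
    calc (1:ℝ) * Real.Gamma (δ * k + 1) = Real.exp 3 * (Real.exp (-3) * Real.Gamma (δ * k + 1)) := by
          rw [← mul_assoc, he, one_mul]
      _ ≤ Real.exp 3 * Real.Gamma (a * k + 1) :=
          mul_le_mul_of_nonneg_left h (Real.exp_pos _).le
  -- rewrite powers as exponentials
  have hpow : ∀ a : ℝ, (-lam * t ^ a) ^ k
      = (-1:ℝ)^k * lam ^ k * Real.exp (a * k * Real.log t) := by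
    intro a
    have h1 : t ^ a = Real.exp (Real.log t * a) := Real.rpow_def_of_pos ht0 a
    have h2 : (Real.exp (Real.log t * a)) ^ k = Real.exp (a * k * Real.log t) := by
      rw [← Real.exp_nat_mul]; ring_nf
    calc (-lam * t ^ a) ^ k = ((-1) * lam * Real.exp (Real.log t * a)) ^ k := by rw [h1]; try ring_nf
      _ = (-1:ℝ)^k * lam ^ k * (Real.exp (Real.log t * a)) ^ k := by rw [mul_pow, mul_pow]
      _ = (-1:ℝ)^k * lam ^ k * Real.exp (a * k * Real.log t) := by rw [h2]
  set Ea : ℝ := Real.exp (α * k * Real.log t) with hEa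
  set Eb : ℝ := Real.exp (β * k * Real.log t) with hEb
  -- bound E a ≤ M^k
  have hEle : ∀ a : ℝ, 0 ≤ a → a ≤ 1 → Real.exp (a * k * Real.log t) ≤ M ^ k := by
    intro a ha0 ha1
    have h1 : Real.exp (a * k * Real.log t) = t ^ (a * k) := by
      rw [Real.rpow_def_of_pos ht0]; ring_nf
    rw [h1]
    calc t ^ (a * (k:ℝ)) ≤ M ^ (a * (k:ℝ)) :=
          Real.rpow_le_rpow ht0.le htM (by positivity)
      _ ≤ M ^ ((k:ℝ)) := Real.rpow_le_rpow_of_exponent_le hM1 (by nlinarith)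
      _ = M ^ k := Real.rpow_natCast M k
  -- piece A : |Ea - Eb| bound
  have hA : |Ea - Eb| ≤ (1/δ + k * M^(k+1)) * |α - β| := by
    have h1 := abs_exp_sub_exp_le (α * k * Real.log t) (β * k * Real.log t)
    rw [← hEa, ← hEb] at h1
    have h2 : |α * k * Real.log t - β * k * Real.log t| = (k:ℝ) * |Real.log t| * |α - β| := by
      rw [show α * k * Real.log t - β * k * Real.log t = ((k:ℝ) * Real.log t) * (α - β) by ring,
        abs_mul, abs_mul, Nat.abs_cast]
      try ring
    rw [h2] at h1
    have hmax : max Ea Eb * ((k:ℝ) * |Real.log t|) ≤ 1/δ + k * M^(k+1) := by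
      rcases le_or_gt t 1 with h1t | h1t
      · have hlt : Real.log t ≤ 0 := Real.log_nonpos ht0.le h1t
        have habs : |Real.log t| = -Real.log t := abs_of_nonpos hlt
        have hEd : ∀ a : ℝ, δ ≤ a → Real.exp (a * k * Real.log t) ≤
            Real.exp (δ * k * Real.log t) := by
          intro a ha
          apply Real.exp_le_exp.2
          nlinarith [mul_nonneg (sub_nonneg.2 ha) hk0]
        have hmax2 : max Ea Eb ≤ Real.exp (δ * k * Real.log t) :=
          max_le (hEd α hαl) (hEd β hβl)
        set z : ℝ := -(δ * k * Real.log t) with hz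
        have hz0 : 0 ≤ z := by nlinarith [mul_nonneg (mul_nonneg hδ0.le hk0) (neg_nonneg.2 hlt)]
        have hze : z * Real.exp (-z) ≤ 1 := by
          have := Real.add_one_le_exp z
          rw [Real.exp_neg]
          rw [mul_inv_le_iff₀ (Real.exp_pos z)]
          linarith
        have hkl : (k:ℝ) * |Real.log t| = z / δ := by
          rw [habs, hz]; field_simp
        have key : Real.exp (δ * k * Real.log t) * ((k:ℝ) * |Real.log t|) ≤ 1/δ := by
          rw [hkl, show δ * (k:ℝ) * Real.log t = -z by rw [hz]; ring]
          calc Real.exp (-z) * (z / δ) = (z * Real.exp (-z)) / δ := by ring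
            _ ≤ 1 / δ := by gcongr
        have hfin : max Ea Eb * ((k:ℝ) * |Real.log t|) ≤ 1/δ := by
          calc max Ea Eb * ((k:ℝ) * |Real.log t|)
              ≤ Real.exp (δ * k * Real.log t) * ((k:ℝ) * |Real.log t|) := by
                apply mul_le_mul_of_nonneg_right hmax2 (by positivity)
            _ ≤ 1/δ := key
        have : (0:ℝ) ≤ (k:ℝ) * M^(k+1) := by positivity
        linarith
      · have hlt : (0:ℝ) ≤ Real.log t := Real.log_nonneg h1t.le
        have habs : |Real.log t| = Real.log t := abs_of_nonneg hlt
        have hlM : Real.log t ≤ M := by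
          have h1'' : Real.log t ≤ Real.log M := Real.log_le_log ht0 htM
          have h2'' : Real.log M ≤ M - 1 := Real.log_le_sub_one_of_pos hM0
          linarith
        have hmax2 : max Ea Eb ≤ M ^ k :=
          max_le (hEle α (by linarith) hα1) (hEle β (by linarith) hβ1)
        have : max Ea Eb * ((k:ℝ) * |Real.log t|) ≤ M^k * ((k:ℝ) * M) := by
          apply mul_le_mul hmax2 ?_ (by positivity) (by positivity)
          rw [habs]
          apply mul_le_mul_of_nonneg_left hlM hk0
        have h1δ : (0:ℝ) ≤ 1/δ := by positivity
        have : M^k * ((k:ℝ) * M) = (k:ℝ) * M^(k+1) := by rw [pow_succ]; ring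
        linarith [this]
    calc |Ea - Eb| ≤ max Ea Eb * ((k:ℝ) * |Real.log t| * |α - β|) := h1
      _ = max Ea Eb * ((k:ℝ) * |Real.log t|) * |α - β| := by ring
      _ ≤ (1/δ + k * M^(k+1)) * |α - β| :=
          mul_le_mul_of_nonneg_right hmax (abs_nonneg _)
  -- piece B : difference of inverse Gammas
  have hBlog : |Real.log (Real.Gamma (α*k+1)) - Real.log (Real.Gamma (β*k+1))| ≤
      ((k:ℝ)+4) * ((k:ℝ) * |α - β|) := by
    have hbk0 : (0:ℝ) ≤ β * k := mul_nonneg (hδ0.le.trans hβl) hk0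
    have hx1 : (1:ℝ) ≤ β * k + 1 := by linarith
    have hxy : β * k + 1 ≤ α * k + 1 := by nlinarith [mul_nonneg (sub_nonneg.2 hab) hk0]
    have h := abs_logGamma_sub_le hx1 hxy
    have hαk : α * (k:ℝ) ≤ (k:ℝ) := by nlinarith [mul_nonneg (sub_nonneg.2 hα1) hk0]
    have hy4 : α * k + 1 + 3 ≤ (k:ℝ) + 4 := by linarith
    have hd0 : (0:ℝ) ≤ α * k + 1 - (β * k + 1) := by linarith
    have habs2 : α * k + 1 - (β * k + 1) = (k:ℝ) * |α - β| := by
      rw [abs_of_nonneg (sub_nonneg.2 hab)]; ring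
    calc |Real.log (Real.Gamma (α*k+1)) - Real.log (Real.Gamma (β*k+1))|
        ≤ (α * k + 1 + 3) * (α * k + 1 - (β * k + 1)) := h
      _ ≤ ((k:ℝ)+4) * (α * k + 1 - (β * k + 1)) := mul_le_mul_of_nonneg_right hy4 hd0
      _ = ((k:ℝ)+4) * ((k:ℝ) * |α - β|) := by rw [habs2]
  have hB : |1 / Real.Gamma (α*k+1) - 1 / Real.Gamma (β*k+1)| ≤
      Real.exp 3 / Real.Gamma (δ*k+1) * (((k:ℝ)+4) * ((k:ℝ) * |α - β|)) := by
    have hinvGa : 1 / Real.Gamma (α*k+1) = Real.exp (-(Real.log (Real.Gamma (α*k+1)))) := by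
      rw [Real.exp_neg, Real.exp_log hGa, one_div]
    have hinvGb : 1 / Real.Gamma (β*k+1) = Real.exp (-(Real.log (Real.Gamma (β*k+1)))) := by
      rw [Real.exp_neg, Real.exp_log hGb, one_div]
    have h := abs_exp_sub_exp_le (-(Real.log (Real.Gamma (α*k+1))))
      (-(Real.log (Real.Gamma (β*k+1))))
    rw [← hinvGa, ← hinvGb] at h
    have habs3 : |-(Real.log (Real.Gamma (α*k+1))) - -(Real.log (Real.Gamma (β*k+1)))|
        = |Real.log (Real.Gamma (α*k+1)) - Real.log (Real.Gamma (β*k+1))| := by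
      rw [show -(Real.log (Real.Gamma (α*k+1))) - -(Real.log (Real.Gamma (β*k+1)))
          = -(Real.log (Real.Gamma (α*k+1)) - Real.log (Real.Gamma (β*k+1))) by ring, abs_neg]
    rw [habs3] at h
    have hmax : max (1 / Real.Gamma (α*k+1)) (1 / Real.Gamma (β*k+1)) ≤
        Real.exp 3 / Real.Gamma (δ*k+1) := max_le (hGinv α hαl) (hGinv β hβl)
    calc |1 / Real.Gamma (α*k+1) - 1 / Real.Gamma (β*k+1)|
        ≤ max (1 / Real.Gamma (α*k+1)) (1 / Real.Gamma (β*k+1)) *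
            |Real.log (Real.Gamma (α*k+1)) - Real.log (Real.Gamma (β*k+1))| := h
      _ ≤ Real.exp 3 / Real.Gamma (δ*k+1) * (((k:ℝ)+4) * ((k:ℝ) * |α - β|)) := by
          apply mul_le_mul hmax hBlog (abs_nonneg _) (by positivity)
  -- assembly
  set K : ℝ := (k:ℝ) with hK
  have hP0 : (0:ℝ) < M ^ (k+1) := pow_pos hM0 _
  have hP1 : (1:ℝ) ≤ M^(k+1) := one_le_pow₀ hM1
  have hMk0 : (0:ℝ) < M ^ k := pow_pos hM0 _
  have hbr : 1/δ + K * M^(k+1) + M^k * ((K+4) * K) ≤ 3/δ * M^(k+1) * (K+4)^2 := by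
    have h1δ : (1:ℝ) ≤ 1/δ := by rw [le_div_iff₀ hδ0]; linarith
    have hδ0' : (0:ℝ) < 1/δ := by positivity
    have hQ0 : (0:ℝ) < (K+4)^2 := by positivity
    have hQ1 : (1:ℝ) ≤ (K+4)^2 := by nlinarith
    have hMk : M^k ≤ M^(k+1) := pow_le_pow_right₀ hM1 (Nat.le_succ k)
    have hKQ : K ≤ (K+4)^2 := by nlinarith
    have hKQ2 : (K+4)*K ≤ (K+4)^2 := by nlinarith
    have t1 : 1/δ ≤ 1/δ * (M^(k+1) * (K+4)^2) :=
      le_mul_of_one_le_right hδ0'.le (by nlinarith)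
    have t2 : K * M^(k+1) ≤ 1/δ * (M^(k+1) * (K+4)^2) := by
      calc K * M^(k+1) = M^(k+1) * K := by ring
        _ ≤ M^(k+1) * (K+4)^2 := mul_le_mul_of_nonneg_left hKQ hP0.le
        _ ≤ 1/δ * (M^(k+1) * (K+4)^2) := le_mul_of_one_le_left (by positivity) h1δ
    have t3 : M^k * ((K+4)*K) ≤ 1/δ * (M^(k+1) * (K+4)^2) := by
      calc M^k * ((K+4)*K) ≤ M^(k+1) * (K+4)^2 :=
            mul_le_mul hMk hKQ2 (by nlinarith) hP0.le
        _ ≤ 1/δ * (M^(k+1) * (K+4)^2) := le_mul_of_one_le_left (by positivity) h1δ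
    have hre : 3/δ * M^(k+1) * (K+4)^2 = 3 * (1/δ * (M^(k+1) * (K+4)^2)) := by ring
    rw [hre]; linarith
  have hLHS : |(-lam * t ^ α) ^ k / Real.Gamma (α * k + 1) -
      (-lam * t ^ β) ^ k / Real.Gamma (β * k + 1)|
      = lam^k * |Ea / Real.Gamma (α*k+1) - Eb / Real.Gamma (β*k+1)| := by
    rw [hpow α, hpow β]
    have hre : (-1:ℝ)^k * lam^k * Ea / Real.Gamma (α*k+1)
        - (-1:ℝ)^k * lam^k * Eb / Real.Gamma (β*k+1)
        = ((-1:ℝ)^k * lam^k) * (Ea / Real.Gamma (α*k+1) - Eb / Real.Gamma (β*k+1)) := by ring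
    rw [hre, abs_mul, abs_mul, abs_pow, abs_neg, abs_one, one_pow, one_mul,
      abs_of_pos (pow_pos hlam k)]
  have hdecomp : Ea / Real.Gamma (α*k+1) - Eb / Real.Gamma (β*k+1)
      = (Ea - Eb) * (1 / Real.Gamma (α*k+1)) + Eb * (1 / Real.Gamma (α*k+1)
        - 1 / Real.Gamma (β*k+1)) := by field_simp; ring
  have hEbM : Eb ≤ M ^ k := hEle β (hδ0.le.trans hβl) hβ1
  have hEb0 : (0:ℝ) ≤ Eb := (Real.exp_pos _).le
  have hGinv0 : (0:ℝ) ≤ 1 / Real.Gamma (α*k+1) := by positivity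
  have hsplit : |Ea / Real.Gamma (α*k+1) - Eb / Real.Gamma (β*k+1)| ≤
      |Ea - Eb| * (1 / Real.Gamma (α*k+1)) +
      Eb * |1 / Real.Gamma (α*k+1) - 1 / Real.Gamma (β*k+1)| := by
    rw [hdecomp]
    calc |(Ea - Eb) * (1 / Real.Gamma (α*k+1)) + Eb * (1 / Real.Gamma (α*k+1)
          - 1 / Real.Gamma (β*k+1))|
        ≤ |(Ea - Eb) * (1 / Real.Gamma (α*k+1))| + |Eb * (1 / Real.Gamma (α*k+1)
          - 1 / Real.Gamma (β*k+1))| := abs_add_le _ _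
      _ = |Ea - Eb| * (1 / Real.Gamma (α*k+1)) +
          Eb * |1 / Real.Gamma (α*k+1) - 1 / Real.Gamma (β*k+1)| := by
          rw [abs_mul, abs_mul, abs_of_nonneg hGinv0, abs_of_nonneg hEb0]
  have hterm1 : |Ea - Eb| * (1 / Real.Gamma (α*k+1)) ≤
      (1/δ + K * M^(k+1)) * |α - β| * (Real.exp 3 / Real.Gamma (δ*k+1)) := by
    apply mul_le_mul hA (hGinv α hαl) hGinv0 (by positivity)
  have hterm2 : Eb * |1 / Real.Gamma (α*k+1) - 1 / Real.Gamma (β*k+1)| ≤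
      M^k * (Real.exp 3 / Real.Gamma (δ*k+1) * ((K+4) * (K * |α - β|))) := by
    exact mul_le_mul hEbM hB (abs_nonneg _) hMk0.le
  have hfac : (0:ℝ) ≤ Real.exp 3 / Real.Gamma (δ*k+1) * |α - β| := by positivity
  have hfinal : |Ea / Real.Gamma (α*k+1) - Eb / Real.Gamma (β*k+1)| ≤
      Real.exp 3 / Real.Gamma (δ*k+1) * |α - β| * (3/δ * M^(k+1) * (K+4)^2) := by
    have hsum := add_le_add hterm1 hterm2
    have hre1 : (1/δ + K * M^(k+1)) * |α - β| * (Real.exp 3 / Real.Gamma (δ*k+1)) +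
        M^k * (Real.exp 3 / Real.Gamma (δ*k+1) * ((K+4) * (K * |α - β|)))
        = Real.exp 3 / Real.Gamma (δ*k+1) * |α - β| *
          (1/δ + K * M^(k+1) + M^k * ((K+4) * K)) := by ring
    rw [hre1] at hsum
    exact le_trans hsplit (le_trans hsum (mul_le_mul_of_nonneg_left hbr hfac))
  rw [hLHS]
  calc lam^k * |Ea / Real.Gamma (α*k+1) - Eb / Real.Gamma (β*k+1)|
      ≤ lam^k * (Real.exp 3 / Real.Gamma (δ*k+1) * |α - β| * (3/δ * M^(k+1) * (K+4)^2)) :=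
        mul_le_mul_of_nonneg_left hfinal (pow_pos hlam k).le
    _ = 3 * Real.exp 3 / δ * lam ^ k * M ^ (k+1) * (K+4)^2 / Real.Gamma (δ * k + 1)
        * |α - β| := by ring







/-- Lipschitz continuity of the eigenmode with respect to the fractional order:
for `0 < δ < 1/2`, `T > 0`, `λ > 0`, there is `C > 0` depending only on `δ, T, λ` with
`|E_{α,1}(−λ t^α) − E_{β,1}(−λ t^β)| ≤ C |α − β|` for all `α, β ∈ [δ, 1−δ]`,
`t ∈ (0, T]`. -/
theorem mittagLeffler_lipschitz_in_order (δ T lam : ℝ)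
    (hδ0 : 0 < δ) (hδ : δ < 1 / 2) (hT : 0 < T) (hlam : 0 < lam) :
    ∃ C > 0, ∀ α ∈ Set.Icc δ (1 - δ), ∀ β ∈ Set.Icc δ (1 - δ), ∀ t ∈ Set.Ioc (0 : ℝ) T,
      |mittagLeffler α 1 (-lam * t ^ α) - mittagLeffler β 1 (-lam * t ^ β)| ≤
        C * |α - β| := by
  set M : ℝ := max T 1 with hM
  have hM1 : (1:ℝ) ≤ M := le_max_right _ _
  have hM0 : (0:ℝ) < M := lt_of_lt_of_le one_pos hM1
  have hy : (0:ℝ) < lam * M := by positivity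
  have hsum0 : Summable (fun k : ℕ => (lam * M) ^ k * ((k:ℝ)+4)^2 / Real.Gamma (δ * k + 1)) :=
    summable_aux hδ0 hy
  set S : ℝ := ∑' k : ℕ, (lam * M) ^ k * ((k:ℝ)+4)^2 / Real.Gamma (δ * k + 1) with hS
  have hSpos : 0 < S := by
    refine Summable.tsum_pos hsum0 (fun k => ?_) 0 ?_
    · have : (0:ℝ) < Real.Gamma (δ * k + 1) := Real.Gamma_pos_of_pos (by positivity)
      positivity
    · have : (0:ℝ) < Real.Gamma (δ * (0:ℕ) + 1) := Real.Gamma_pos_of_pos (by norm_num)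
      positivity
  refine ⟨3 * Real.exp 3 / δ * M * S, by positivity, ?_⟩
  intro α hα β hβ t ht
  have ht0 := ht.1
  have htM : t ≤ M := ht.2.trans (le_max_left _ _)
  -- the summand
  set f : ℝ → ℕ → ℝ := fun a k => (-lam * t ^ a) ^ k / Real.Gamma (a * k + 1) with hf
  -- Lipschitz bound sequence
  set L : ℕ → ℝ := fun k =>
    3 * Real.exp 3 / δ * lam ^ k * M ^ (k+1) * ((k:ℝ)+4)^2 / Real.Gamma (δ * k + 1) with hL
  have hLsum : Summable L := by
    refine (hsum0.mul_left (3 * Real.exp 3 / δ * M)).congr fun k => ?_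
    show 3 * Real.exp 3 / δ * M * ((lam * M) ^ k * ((k:ℝ)+4)^2 / Real.Gamma (δ * k + 1))
      = 3 * Real.exp 3 / δ * lam ^ k * M ^ (k+1) * ((k:ℝ)+4)^2 / Real.Gamma (δ * k + 1)
    ring
  -- summability of each series
  have hsummand : ∀ a : ℝ, a ∈ Set.Icc δ (1-δ) → Summable (f a) := by
    intro a ha
    refine Summable.of_norm_bounded
      (g := fun k => Real.exp 3 * ((lam * M) ^ k * ((k:ℝ)+4)^2 / Real.Gamma (δ * k + 1)))
      (hsum0.mul_left _) fun k => ?_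
    have hk0 : (0:ℝ) ≤ (k:ℝ) := Nat.cast_nonneg k
    have ha0 : 0 < a := lt_of_lt_of_le hδ0 ha.1
    have hak : (0:ℝ) ≤ a * k := mul_nonneg ha0.le hk0
    have hGa : (0:ℝ) < Real.Gamma (a * k + 1) := Real.Gamma_pos_of_pos (by linarith)
    have hGd : (0:ℝ) < Real.Gamma (δ * k + 1) := Real.Gamma_pos_of_pos (by positivity)
    have hGge : Real.exp (-3) * Real.Gamma (δ * k + 1) ≤ Real.Gamma (a * k + 1) :=
      Gamma_ge_scaled (by have := mul_nonneg hδ0.le hk0; linarith) (by nlinarith [ha.1, hk0])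
    have hta : (0:ℝ) < t ^ a := Real.rpow_pos_of_pos ht0 a
    have htaM : t ^ a ≤ M := by
      calc t ^ a ≤ M ^ a := Real.rpow_le_rpow ht0.le htM ha0.le
        _ ≤ M ^ (1:ℝ) := Real.rpow_le_rpow_of_exponent_le hM1 (by linarith [ha.2, hδ0])
        _ = M := Real.rpow_one M
    have hbase : |(-lam * t ^ a)| ≤ lam * M := by
      rw [abs_mul, abs_neg, abs_of_pos hlam, abs_of_pos hta]
      exact mul_le_mul_of_nonneg_left htaM hlam.le
    have hnum : |(-lam * t ^ a) ^ k| ≤ (lam * M) ^ k := by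
      rw [abs_pow]
      exact pow_le_pow_left₀ (abs_nonneg _) hbase k
    rw [Real.norm_eq_abs, hf, abs_div, abs_of_pos hGa]
    have hGinv : 1 / Real.Gamma (a * k + 1) ≤ Real.exp 3 / Real.Gamma (δ * k + 1) := by
      rw [div_le_div_iff₀ hGa hGd]
      have he : Real.exp 3 * Real.exp (-3) = 1 := by rw [← Real.exp_add]; norm_num
      calc (1:ℝ) * Real.Gamma (δ * k + 1)
          = Real.exp 3 * (Real.exp (-3) * Real.Gamma (δ * k + 1)) := by
            rw [← mul_assoc, he, one_mul]
        _ ≤ Real.exp 3 * Real.Gamma (a * k + 1) :=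
            mul_le_mul_of_nonneg_left hGge (Real.exp_pos _).le
    calc |(-lam * t ^ a) ^ k| / Real.Gamma (a * k + 1)
        = |(-lam * t ^ a) ^ k| * (1 / Real.Gamma (a * k + 1)) := by ring
      _ ≤ (lam * M) ^ k * (Real.exp 3 / Real.Gamma (δ * k + 1)) :=
          mul_le_mul hnum hGinv (by positivity) (by positivity)
      _ ≤ (lam * M) ^ k * (Real.exp 3 / Real.Gamma (δ * k + 1)) * ((k:ℝ)+4)^2 :=
          le_mul_of_one_le_right
            (mul_nonneg (by positivity) (div_nonneg (Real.exp_pos 3).le hGd.le))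
            (by nlinarith [hk0])
      _ = Real.exp 3 * ((lam * M) ^ k * ((k:ℝ)+4)^2 / Real.Gamma (δ * k + 1)) := by ring
  have hfα := hsummand α hα
  have hfβ := hsummand β hβ
  have hd : ∀ k, |f α k - f β k| ≤ L k * |α - β| := fun k =>
    term_lip hδ0 hδ hT hlam hα hβ ht k
  have hLnonneg : ∀ k, 0 ≤ L k := by
    intro k
    have hGd : (0:ℝ) < Real.Gamma (δ * k + 1) := Real.Gamma_pos_of_pos (by positivity)
    simp only [hL]
    positivity
  have habs : Summable (fun k => |f α k - f β k|) :=
    Summable.of_nonneg_of_le (fun k => abs_nonneg _) hd (hLsum.mul_right _)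
  have hsub : Summable (fun k => f α k - f β k) := hfα.sub hfβ
  have htsumL : ∑' k, L k = 3 * Real.exp 3 / δ * M * S := by
    calc ∑' k, L k
        = ∑' k : ℕ, 3 * Real.exp 3 / δ * M *
            ((lam * M) ^ k * ((k:ℝ)+4)^2 / Real.Gamma (δ * k + 1)) :=
          tsum_congr fun k => by
            show 3 * Real.exp 3 / δ * lam ^ k * M ^ (k+1) * ((k:ℝ)+4)^2 /
                Real.Gamma (δ * k + 1)
              = 3 * Real.exp 3 / δ * M * ((lam * M) ^ k * ((k:ℝ)+4)^2 / Real.Gamma (δ * k + 1))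
            ring
      _ = 3 * Real.exp 3 / δ * M * S := by rw [tsum_mul_left]
  have hml : ∀ a : ℝ, mittagLeffler a 1 (-lam * t ^ a) = ∑' k, f a k := fun a => rfl
  calc |mittagLeffler α 1 (-lam * t ^ α) - mittagLeffler β 1 (-lam * t ^ β)|
      = |∑' k, (f α k - f β k)| := by rw [hml α, hml β, Summable.tsum_sub hfα hfβ]
    _ ≤ ∑' k, |f α k - f β k| := by
        have h := norm_tsum_le_tsum_norm (f := fun k => f α k - f β k)
          (by simpa [Real.norm_eq_abs] using habs)
        simpa [Real.norm_eq_abs] using h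
    _ ≤ ∑' k, L k * |α - β| := Summable.tsum_le_tsum hd habs (hLsum.mul_right _)
    _ = (∑' k, L k) * |α - β| := tsum_mul_right
    _ = 3 * Real.exp 3 / δ * M * S * |α - β| := by rw [htsumL]
end
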